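/- arXiv:1911.06462 — 2 statements merged into one kernel-verified Lean document; each statement's English description precedes it below -/
import Mathlib

section
/- Let 0 < α < 1/6, S > 0, and B, b, g be nonnegative reals with B < α·S, b + g ≤ (2α/(1+3α))·S, and b < (2α/(1+3α))·S. Then (B + b)/(S + b - g) < 3α. -/
theorem bad_fraction_lt_three_alpha_general (α S B b g : ℝ)
    (hα0 : 0 < α) (hα : α < 1 / 6) (hS : 0 < S)
    (hb0 : 0 ≤ b) (hg0 : 0 ≤ g)
    (hB : B < α * S)
    (hbg : b + g ≤ (2 * α / (1 + 3 * α)) * S) :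
    (B + b) / (S + b - g) < 3 * α := by
  have hpos : 0 < 1 + 3 * α := by linarith
  have hchurn : (b + g) * (1 + 3 * α) ≤ 2 * α * S := by
    rwa [div_mul_eq_mul_div, le_div_iff₀ hpos] at hbg
  have hden : 0 < S + b - g := by nlinarith
  -- Since `3α ≤ 1 - 3α`, we get `(1 - 3α) b + 3α g ≤ (1 - 3α)(b + g) ≤ 2αS`.
  have hnum : B + b < 3 * α * (S + b - g) := by
    nlinarith [mul_le_mul_of_nonneg_left hg0 (by linarith : (0 : ℝ) ≤ 1 - 6 * α)]
  exact (div_lt_iff₀ hden).2 hnum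

theorem bad_fraction_lt_three_alpha (α S B b g : ℝ)
    (hα0 : 0 < α) (hα : α < 1 / 6) (hS : 0 < S)
    (hB0 : 0 ≤ B) (hb0 : 0 ≤ b) (hg0 : 0 ≤ g)
    (hB : B < α * S)
    (hbg : b + g ≤ (2 * α / (1 + 3 * α)) * S)
    (hb : b < (2 * α / (1 + 3 * α)) * S) :
    (B + b) / (S + b - g) < 3 * α :=
  bad_fraction_lt_three_alpha_general α S B b g hα0 hα hS hb0 hg0 hB hbg
end

section
/- Suppose for each i in a finite index set I we have A_i·ℓ_i ≤ C·S_i with S_i/11 ≤ (d_i + jB_i + jG_i)·ℓ_i, where ℓ_i, A_i, S_i, d_i, jB_i, jG_i ≥ 0, the total departures satisfy sum over i of d_i·ℓ_i ≤ 2δ, and jB_i ≤ sqrt(2T_i(c·jG_i + 1)) for a constant c ≥ 1. Then sum over i of A_i·ℓ_i ≤ 11C·(2δ + sqrt(2·(sum T_i·ℓ_i)·(sum (c·jG_i+1)·ℓ_i)) + sum jG_i·ℓ_i). -/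
/-!
Each iteration costs at most `11 C` times the churn `(d + jB + jG) ℓ` it sees, so the total cost
is at most `11 C` times the total churn. Departures total at most `2δ`, and the bad joins are
controlled by Cauchy–Schwarz: writing `jB ℓ ≤ √(2 T ℓ) · √((c jG + 1) ℓ)` and summing gives
`∑ jB ℓ ≤ √(2 (∑ T ℓ) (∑ (c jG + 1) ℓ))`.
-/

open Finset

namespace Real

variable {ι : Type*} {s : Finset ι}

theorem sum_sqrt_mul_sqrt_le_of_nonneg {f g : ι → ℝ} (hf : ∀ i ∈ s, 0 ≤ f i)
    (hg : ∀ i ∈ s, 0 ≤ g i) :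
    ∑ i ∈ s, √(f i) * √(g i) ≤ √(∑ i ∈ s, f i) * √(∑ i ∈ s, g i) := by
  have hf2 : ∑ i ∈ s, √(f i) ^ 2 = ∑ i ∈ s, f i :=
    sum_congr rfl fun i hi ↦ sq_sqrt (hf i hi)
  have hg2 : ∑ i ∈ s, √(g i) ^ 2 = ∑ i ∈ s, g i :=
    sum_congr rfl fun i hi ↦ sq_sqrt (hg i hi)
  simpa only [hf2, hg2] using sum_mul_le_sqrt_mul_sqrt s (fun i ↦ √(f i)) (fun i ↦ √(g i))

theorem sqrt_mul_mul_eq_sqrt_mul_mul_sqrt_mul {a b w : ℝ} (ha : 0 ≤ a) (hw : 0 ≤ w) :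
    √(a * b) * w = √(a * w) * √(b * w) := by
  rw [← sqrt_mul (mul_nonneg ha hw), show a * w * (b * w) = a * b * (w * w) by ring,
    sqrt_mul' _ (mul_self_nonneg w), sqrt_mul_self hw]

theorem sum_mul_le_sqrt_mul_of_le_sqrt {x a b w : ι → ℝ} (ha : ∀ i ∈ s, 0 ≤ a i)
    (hb : ∀ i ∈ s, 0 ≤ b i) (hw : ∀ i ∈ s, 0 ≤ w i) (hx : ∀ i ∈ s, x i ≤ √(a i * b i)) :
    ∑ i ∈ s, x i * w i ≤ √((∑ i ∈ s, a i * w i) * ∑ i ∈ s, b i * w i) := by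
  have hsum_nonneg : 0 ≤ ∑ i ∈ s, a i * w i :=
    sum_nonneg fun i hi ↦ mul_nonneg (ha i hi) (hw i hi)
  calc ∑ i ∈ s, x i * w i ≤ ∑ i ∈ s, √(a i * b i) * w i :=
        sum_le_sum fun i hi ↦ mul_le_mul_of_nonneg_right (hx i hi) (hw i hi)
    _ = ∑ i ∈ s, √(a i * w i) * √(b i * w i) :=
        sum_congr rfl fun i hi ↦ sqrt_mul_mul_eq_sqrt_mul_mul_sqrt_mul (ha i hi) (hw i hi)
    _ ≤ √(∑ i ∈ s, a i * w i) * √(∑ i ∈ s, b i * w i) :=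
        sum_sqrt_mul_sqrt_le_of_nonneg (fun i hi ↦ mul_nonneg (ha i hi) (hw i hi))
          (fun i hi ↦ mul_nonneg (hb i hi) (hw i hi))
    _ = √((∑ i ∈ s, a i * w i) * ∑ i ∈ s, b i * w i) := (sqrt_mul hsum_nonneg _).symm

end Real

theorem aggregated_cost_bound_general {ι : Type*} (s : Finset ι)
    (A ℓ S d jB jG T : ι → ℝ) (C c δ : ℝ)
    (hC : 0 ≤ C) (hc : 1 ≤ c)
    (hℓ : ∀ i ∈ s, 0 ≤ ℓ i)
    (hjG : ∀ i ∈ s, 0 ≤ jG i)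
    (hT : ∀ i ∈ s, 0 ≤ T i)
    (hAi : ∀ i ∈ s, A i * ℓ i ≤ C * S i)
    (hSi : ∀ i ∈ s, S i / 11 ≤ (d i + jB i + jG i) * ℓ i)
    (hdep : (∑ i ∈ s, d i * ℓ i) ≤ 2 * δ)
    (hjBi : ∀ i ∈ s, jB i ≤ Real.sqrt (2 * T i * (c * jG i + 1))) :
    (∑ i ∈ s, A i * ℓ i) ≤
      11 * C * (2 * δ +
        Real.sqrt (2 * (∑ i ∈ s, T i * ℓ i) * (∑ i ∈ s, (c * jG i + 1) * ℓ i)) +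
        (∑ i ∈ s, jG i * ℓ i)) := by
  have hbad : ∑ i ∈ s, jB i * ℓ i ≤
      √(2 * (∑ i ∈ s, T i * ℓ i) * (∑ i ∈ s, (c * jG i + 1) * ℓ i)) := by
    have h := Real.sum_mul_le_sqrt_mul_of_le_sqrt (fun i hi ↦ mul_nonneg zero_le_two (hT i hi))
      (fun i hi ↦ by nlinarith [hjG i hi]) hℓ hjBi
    simpa only [mul_assoc, ← mul_sum] using h
  calc ∑ i ∈ s, A i * ℓ i ≤ ∑ i ∈ s, 11 * C * ((d i + jB i + jG i) * ℓ i) :=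
        sum_le_sum fun i hi ↦ by nlinarith [hAi i hi, hSi i hi]
    _ = 11 * C * (∑ i ∈ s, d i * ℓ i + ∑ i ∈ s, jB i * ℓ i + ∑ i ∈ s, jG i * ℓ i) := by
        simp only [← mul_sum, add_mul, sum_add_distrib]
    _ ≤ _ := by gcongr

theorem aggregated_cost_bound {ι : Type*} (s : Finset ι)
    (A ℓ S d jB jG T : ι → ℝ) (C c δ : ℝ)
    (hC : 0 ≤ C) (hc : 1 ≤ c) (hδ : 0 ≤ δ)
    (hℓ : ∀ i ∈ s, 0 ≤ ℓ i) (hA : ∀ i ∈ s, 0 ≤ A i)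
    (hS : ∀ i ∈ s, 0 ≤ S i) (hd : ∀ i ∈ s, 0 ≤ d i)
    (hjB : ∀ i ∈ s, 0 ≤ jB i) (hjG : ∀ i ∈ s, 0 ≤ jG i)
    (hT : ∀ i ∈ s, 0 ≤ T i)
    (hAi : ∀ i ∈ s, A i * ℓ i ≤ C * S i)
    (hSi : ∀ i ∈ s, S i / 11 ≤ (d i + jB i + jG i) * ℓ i)
    (hdep : (∑ i ∈ s, d i * ℓ i) ≤ 2 * δ)
    (hjBi : ∀ i ∈ s, jB i ≤ Real.sqrt (2 * T i * (c * jG i + 1))) :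
    (∑ i ∈ s, A i * ℓ i) ≤
      11 * C * (2 * δ +
        Real.sqrt (2 * (∑ i ∈ s, T i * ℓ i) * (∑ i ∈ s, (c * jG i + 1) * ℓ i)) +
        (∑ i ∈ s, jG i * ℓ i)) :=
  aggregated_cost_bound_general s A ℓ S d jB jG T C c δ hC hc hℓ hjG hT hAi hSi hdep hjBi
end
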